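/- Let q ≥ 2, m ≥ 3, Σ = {x_1, …, x_q}, and let S = ⋃_{i=1}^q {x_i^m, x_i^{m+1}} ∪ ⋃_{i ≠ j} {x_i x_j^{m−1}, x_j^{m−1} x_i}. Let t(S) denote the number of words over Σ not in S^†. Then t(S) ≥ (q^{m²+m+1} − q^{m²+m} + q^{m+1} − q^{2m+1} + q^m − q) / ((q−1)(q^m − 1)(q^{m+1} − 1)). -/

import Mathlib

/-!
Every word of `S` has length `m` or `m + 1`, so the length of every word of `S^†` lies in the
numerical semigroup `⟨m, m + 1⟩`. Its gaps are the numbers `a m + r` with `a < r < m`; all words of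
these lengths are missing, and summing the geometric series `∑ q ^ (a m + r)` gives the bound.

Since `Set.ncard` of an infinite set is `0`, the complement of `S^†` must also be shown finite.
A long word contains some letter `j` very often. After removing blocks `x_i^m` of the other
letters, each remaining other letter is absorbed with `m - 1` copies of `j` (by `x_i x_j^{m-1}` or
`x_j^{m-1} x_i`), and what is left is a power of `j` beyond the Frobenius number `m² - m - 1`
of `⟨m, m + 1⟩`.
-/

/-- `Shuffle u v w` means that the word `w` is an interleaving (shuffle) of the
words `u` and `v`. -/
inductive Shuffle {α : Type*} : List α → List α → List α → Prop
  | nil : Shuffle [] [] []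
  | left {a : α} {u v w : List α} : Shuffle u v w → Shuffle (a :: u) v (a :: w)
  | right {a : α} {u v w : List α} : Shuffle u v w → Shuffle u (a :: v) (a :: w)

/-- `IterShuffle S y` means `y` belongs to the iterated shuffle `S^†`, i.e. `y`
can be obtained by shuffling together finitely many (possibly zero) words of `S`. -/
inductive IterShuffle {α : Type*} (S : Set (List α)) : List α → Prop
  | nil : IterShuffle S []
  | step {u w y : List α} : u ∈ S → IterShuffle S w → Shuffle u w y → IterShuffle S y

open Finset

namespace Shuffle

variable {α : Type*} {u v w : List α}

theorem symm (h : Shuffle u v w) : Shuffle v u w := by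
  induction h with
  | nil => exact .nil
  | left _ ih => exact .right ih
  | right _ ih => exact .left ih

theorem nil_left (v : List α) : Shuffle [] v v := by
  induction v with
  | nil => exact .nil
  | cons a v ih => exact .right ih

theorem prepend_left (x : List α) (h : Shuffle u v w) : Shuffle (x ++ u) v (x ++ w) := by
  induction x with
  | nil => exact h
  | cons a x ih => exact .left ih

theorem prepend_right (x : List α) (h : Shuffle u v w) : Shuffle u (x ++ v) (x ++ w) :=
  (h.symm.prepend_left x).symm

theorem append_right (y : List α) (h : Shuffle u v w) : Shuffle u (v ++ y) (w ++ y) := by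
  induction h with
  | nil => exact nil_left y
  | left _ ih => exact .left ih
  | right _ ih => exact .right ih

theorem length_eq (h : Shuffle u v w) : w.length = u.length + v.length := by
  induction h <;> grind

theorem count_eq [DecidableEq α] (h : Shuffle u v w) (a : α) :
    w.count a = u.count a + v.count a := by
  induction h <;> grind

theorem exists_replicate_of_le_count [DecidableEq α] {a : α} {k : ℕ} (h : k ≤ w.count a) :
    ∃ v, Shuffle (List.replicate k a) v w := by
  induction w generalizing k with
  | nil => exact ⟨[], by simp_all [Shuffle.nil]⟩
  | cons b w ih =>
    by_cases hb : b = a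
    · subst hb
      cases k with
      | zero => exact ⟨_, nil_left _⟩
      | succ k =>
        obtain ⟨v, hv⟩ := ih (k := k) (by simpa using h)
        exact ⟨v, hv.left⟩
    · obtain ⟨v, hv⟩ := ih (by simpa [List.count_cons, hb] using h)
      exact ⟨b :: v, hv.right⟩

end Shuffle

namespace IterShuffle

variable {α : Type*} {S : Set (List α)}

theorem of_mem {u : List α} (hu : u ∈ S) : IterShuffle S u :=
  step hu nil (Shuffle.nil_left u).symm

theorem append {x y : List α} (hx : IterShuffle S x) (hy : IterShuffle S y) :
    IterShuffle S (x ++ y) := by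
  induction hx with
  | nil => exact hy
  | step hu _ hsh ih => exact step hu ih (hsh.append_right y)

theorem length_mem_closure {y : List α} (hy : IterShuffle S y) :
    y.length ∈ AddSubmonoid.closure (List.length '' S) := by
  induction hy with
  | nil => exact zero_mem _
  | step hu _ hsh ih =>
    rw [hsh.length_eq]
    exact add_mem (AddSubmonoid.subset_closure ⟨_, hu, rfl⟩) ih

theorem replicate_of_mem_closure {a : α} {K : Set ℕ} (hK : ∀ k ∈ K, List.replicate k a ∈ S)
    {n : ℕ} (hn : n ∈ AddSubmonoid.closure K) : IterShuffle S (List.replicate n a) := by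
  induction hn using AddSubmonoid.closure_induction with
  | mem k hk => exact of_mem (hK k hk)
  | zero => exact nil
  | add k l _ _ hk hl => rw [List.replicate_add]; exact hk.append hl

end IterShuffle

theorem mem_closure_pair_succ_of_le {m n : ℕ} (hm : 1 < m) (hn : m * m - m ≤ n) :
    n ∈ AddSubmonoid.closure {m, m + 1} := by
  refine (frobeniusNumber_iff.mp (frobeniusNumber_pair ?_ hm (by omega))).2 n ?_
  · exact Nat.coprime_self_add_right.mpr (Nat.coprime_one_right m)
  · have := Nat.mul_le_mul_left m hm
    rw [Nat.mul_succ]; omega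

theorem mul_add_notMem_closure_pair_succ {m a r : ℕ} (har : a < r) (hrm : r < m) :
    a * m + r ∉ AddSubmonoid.closure {m, m + 1} := by
  rw [AddSubmonoid.mem_closure_pair]
  rintro ⟨b, c, h⟩
  simp only [smul_eq_mul] at h
  obtain hle | hlt := le_or_gt (b + c) a
  · have := Nat.mul_le_mul_right m hle
    nlinarith
  · have := Nat.mul_le_mul_right m hlt
    nlinarith

-- The gaps of the numerical semigroup `⟨m, m + 1⟩`, written as `a * m + r` with `a < r < m`.
def gaps (m : ℕ) : Finset ℕ :=
  ((range m).sigma fun a => Ioo a m).image fun p => p.1 * m + p.2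

theorem sum_pow_gaps {K : Type*} [Field K] (m : ℕ) {x : K} (hx : x ≠ 1) (hxm : x ^ m ≠ 1)
    (hxm' : x ^ (m + 1) ≠ 1) :
    ∑ n ∈ gaps m, x ^ n =
      (x ^ (m ^ 2 + m + 1) - x ^ (m ^ 2 + m) + x ^ (m + 1) - x ^ (2 * m + 1) + x ^ m - x) /
        ((x - 1) * (x ^ m - 1) * (x ^ (m + 1) - 1)) := by
  have hinj :
      Set.InjOn (fun p : Σ _ : ℕ, ℕ => p.1 * m + p.2) ((range m).sigma fun a => Ioo a m) := by
    rintro ⟨a, r⟩ hp ⟨b, t⟩ hq h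
    simp only [coe_sigma, Set.mem_sigma_iff, coe_range, Set.mem_Iio, coe_Ioo, Set.mem_Ioo] at hp hq
    change a * m + r = b * m + t at h
    have hrt : r = t := by
      simpa [Nat.mul_add_mod_of_lt hp.2.2, Nat.mul_add_mod_of_lt hq.2.2] using congrArg (· % m) h
    subst hrt
    rw [Nat.eq_of_mul_eq_mul_right (by omega) (Nat.add_right_cancel h)]
  have hrow (a : ℕ) (ha : a ∈ range m) :
      ∑ r ∈ Ioo a m, x ^ (a * m + r) = ((x ^ m) ^ a * x ^ m - (x ^ (m + 1)) ^ a * x) / (x - 1) := by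
    rw [mem_range] at ha
    calc ∑ r ∈ Ioo a m, x ^ (a * m + r) = x ^ (a * m) * ∑ r ∈ Ico (a + 1) m, x ^ r := by
          rw [Ico_add_one_left_eq_Ioo, mul_sum]; simp only [pow_add]
      _ = _ := by rw [geom_sum_Ico hx (m := a + 1) ha, mul_div_assoc']; ring
  rw [gaps, sum_image hinj, sum_sigma, sum_congr rfl hrow, ← sum_div, sum_sub_distrib, ← sum_mul,
    ← sum_mul, geom_sum_eq hxm, geom_sum_eq hxm', ← pow_mul, ← pow_mul]
  have hx1 : x - 1 ≠ 0 := sub_ne_zero.mpr hx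
  have hxm1 : x ^ m - 1 ≠ 0 := sub_ne_zero.mpr hxm
  have hxm1' : x ^ (m + 1) - 1 ≠ 0 := sub_ne_zero.mpr hxm'
  field_simp
  ring

theorem ncard_setOf_length_mem (α : Type*) [Fintype α] (F : Finset ℕ) :
    {w : List α | w.length ∈ F}.ncard = ∑ n ∈ F, Fintype.card α ^ n := by
  have (n : ℕ) : Finite {w : List α // w.length = n} := (List.finite_length_eq α n).to_subtype
  rw [← Nat.card_coe_set_eq, ← Nat.card_congr (Equiv.sigmaSubtypeFiberEquivSubtype List.length
    (p := (· ∈ {w : List α | w.length ∈ F})) (q := (· ∈ F)) fun _ => Iff.rfl), Nat.card_sigma,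
    ← Finset.sum_coe_sort F]
  congr! with n
  rw [← card_vector, ← Nat.card_eq_fintype_card]
  rfl

section Count

variable {α : Type*} [DecidableEq α] [Fintype α]

theorem List.sum_count_eq_length (w : List α) : ∑ i, w.count i = w.length := by
  simpa using Multiset.sum_count_eq_card (s := univ) (m := (w : Multiset α)) (by simp)

theorem List.length_le_count_add_card_mul {w : List α} {j : α} {k : ℕ}
    (hk : ∀ i ≠ j, w.count i ≤ k) : w.length ≤ w.count j + Fintype.card α * k := by
  calc w.length = ∑ i, w.count i := w.sum_count_eq_length.symm
    _ ≤ ∑ i, (k + if i = j then w.count j else 0) := by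
      gcongr with i
      by_cases hij : i = j
      · simp [hij]
      · simpa [hij] using hk i hij
    _ = w.count j + Fintype.card α * k := by simp [sum_add_distrib, add_comm]

theorem List.exists_lt_count_of_card_mul_lt {w : List α} {k : ℕ}
    (hw : Fintype.card α * k < w.length) : ∃ j, k < w.count j := by
  obtain ⟨j, -, hj⟩ := Finset.exists_lt_of_sum_lt (s := univ) (f := fun _ => k) (g := (w.count ·))
    (by simpa [w.sum_count_eq_length] using hw)
  exact ⟨j, hj⟩

end Count

def protoSet (α : Type*) (m : ℕ) : Set (List α) :=
  {w | ∃ i : α, w = List.replicate m i ∨ w = List.replicate (m + 1) i} ∪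
    {w | ∃ i j : α, i ≠ j ∧
      (w = i :: List.replicate (m - 1) j ∨ w = List.replicate (m - 1) j ++ [i])}

section ProtoSet

variable {α : Type*} {m : ℕ}

theorem length_image_protoSet_subset (hm : 1 ≤ m) :
    List.length '' protoSet α m ⊆ {m, m + 1} := by
  rintro _ ⟨w, ⟨i, rfl | rfl⟩ | ⟨i, j, -, rfl | rfl⟩, rfl⟩ <;> simp <;> omega

theorem IterShuffle.replicate_protoSet (hm : 1 < m) (j : α) {n : ℕ} (hn : m * m - m ≤ n) :
    IterShuffle (protoSet α m) (List.replicate n j) := by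
  refine IterShuffle.replicate_of_mem_closure ?_ (mem_closure_pair_succ_of_le hm hn)
  rintro k (rfl | rfl)
  exacts [.inl ⟨j, .inl rfl⟩, .inl ⟨j, .inr rfl⟩]

theorem setOf_length_mem_gaps_subset (hm : 1 ≤ m) :
    {w : List α | w.length ∈ gaps m} ⊆ {w | ¬ IterShuffle (protoSet α m) w} := by
  intro w hw hiter
  obtain ⟨⟨a, r⟩, hp, hlen⟩ := mem_image.mp hw
  simp only [mem_sigma, mem_range, mem_Ioo] at hp
  refine mul_add_notMem_closure_pair_succ hp.2.1 hp.2.2 ?_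
  rw [hlen]
  exact AddSubmonoid.closure_mono (length_image_protoSet_subset hm) hiter.length_mem_closure

variable [DecidableEq α]

/-- A letter `p ≠ j` is absorbed together with `m - 1` copies of `j`, taken after it in `y` if
there are enough, and otherwise from the block `j ^ s` in front. -/
theorem IterShuffle.replicate_append_protoSet (hm : 1 < m) (j : α) (d s : ℕ) (y : List α)
    (hd : y.length = y.count j + d) (hs : m * d + m * m ≤ s + y.count j) :
    IterShuffle (protoSet α m) (List.replicate s j ++ y) := by
  match y with
  | [] => simpa using replicate_protoSet hm j (n := s) (by simp at hs; omega)
  | p :: δ =>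
    by_cases hpj : p = j
    · subst hpj
      have hrep : List.replicate s p ++ p :: δ = List.replicate (s + 1) p ++ δ := by
        simp [List.replicate_succ']
      rw [hrep]
      exact replicate_append_protoSet hm p d (s + 1) δ (by simp at hd; omega)
        (by simp at hs; omega)
    rw [List.count_cons_of_ne hpj, List.length_cons] at hd
    rw [List.count_cons_of_ne hpj] at hs
    obtain _ | d := d
    · have : δ.count j ≤ δ.length := List.count_le_length
      omega
    rw [Nat.mul_succ] at hs
    by_cases hδ : m - 1 ≤ δ.count j
    · obtain ⟨δ', hδ'⟩ := Shuffle.exists_replicate_of_le_count hδ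
      have hlen := hδ'.length_eq
      have hcount := hδ'.count_eq j
      simp only [List.length_replicate, List.count_replicate_self] at hlen hcount
      exact step (.inr ⟨p, j, hpj, .inl rfl⟩)
        (replicate_append_protoSet hm j d s δ' (by omega) (by omega))
        (hδ'.left.prepend_right _)
    · have : m ≤ m * m := Nat.le_mul_self m
      have hsh : Shuffle (List.replicate (m - 1) j ++ [p]) (List.replicate (s - (m - 1)) j ++ δ)
          (List.replicate s j ++ p :: δ) := by
        have h := (((Shuffle.nil_left δ).left (a := p)).prepend_right
          (List.replicate (s - (m - 1)) j)).prepend_left (List.replicate (m - 1) j)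
        rwa [← List.append_assoc, ← List.replicate_add, Nat.add_sub_cancel' (by omega)] at h
      exact step (.inr ⟨p, j, hpj, .inr rfl⟩)
        (replicate_append_protoSet hm j d (s - (m - 1)) δ (by omega) (by omega)) hsh
termination_by y.length
decreasing_by all_goals simp only [List.length_cons]; omega

variable [Fintype α]

/-- Blocks `i ^ m` of letters `i ≠ j` are removed first, so that fewer than `m` copies of each
letter other than `j` remain to be absorbed. -/
theorem IterShuffle.protoSet_of_le_count (hm : 1 < m) {j : α} {w : List α}
    (hw : m * (Fintype.card α * m) + m * m ≤ w.count j) : IterShuffle (protoSet α m) w := by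
  by_cases hblock : ∃ i ≠ j, m ≤ w.count i
  · obtain ⟨i, hij, hi⟩ := hblock
    obtain ⟨v, hv⟩ := Shuffle.exists_replicate_of_le_count hi
    have hcount := hv.count_eq j
    rw [List.count_replicate, if_neg (by simpa using hij), zero_add] at hcount
    exact step (.inl ⟨i, .inl rfl⟩) (protoSet_of_le_count hm (hcount ▸ hw)) hv
  · push Not at hblock
    have hlen := List.length_le_count_add_card_mul (fun i hi => (hblock i hi).le)
    have := Nat.mul_le_mul_left m (show w.length - w.count j ≤ Fintype.card α * m by omega)
    simpa using replicate_append_protoSet hm j (w.length - w.count j) 0 w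
      (by have : w.count j ≤ w.length := List.count_le_length; omega) (by omega)
termination_by w.length
decreasing_by have := hv.length_eq; simp only [List.length_replicate] at this; omega

theorem finite_setOf_not_iterShuffle_protoSet (hm : 1 < m) :
    {w : List α | ¬ IterShuffle (protoSet α m) w}.Finite := by
  refine (List.finite_length_le α (Fintype.card α * (m * (Fintype.card α * m) + m * m))).subset ?_
  intro w hw
  by_contra hlong
  obtain ⟨j, hj⟩ := List.exists_lt_count_of_card_mul_lt (not_le.mp hlong)
  exact hw (IterShuffle.protoSet_of_le_count hm hj.le)

end ProtoSet

/-- For `q ≥ 2`, `m ≥ 3` and the prototypical set `S`, the number `t(S)` of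
words not in `S^†` satisfies
`t(S) ≥ (q^{m²+m+1} - q^{m²+m} + q^{m+1} - q^{2m+1} + q^m - q) /
((q-1)(q^m-1)(q^{m+1}-1))`. -/
theorem count_missing_lower_bound (q m : ℕ) (hq : 2 ≤ q) (hm : 3 ≤ m)
    (S : Set (List (Fin q)))
    (hS : S = {w | ∃ i : Fin q, w = List.replicate m i ∨ w = List.replicate (m + 1) i} ∪
              {w | ∃ i j : Fin q, i ≠ j ∧
                (w = i :: List.replicate (m - 1) j ∨
                 w = List.replicate (m - 1) j ++ [i])}) :
    ((q : ℚ) ^ (m ^ 2 + m + 1) - (q : ℚ) ^ (m ^ 2 + m) + (q : ℚ) ^ (m + 1)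
        - (q : ℚ) ^ (2 * m + 1) + (q : ℚ) ^ m - (q : ℚ)) /
      (((q : ℚ) - 1) * ((q : ℚ) ^ m - 1) * ((q : ℚ) ^ (m + 1) - 1))
    ≤ ({w : List (Fin q) | ¬ IterShuffle S w}.ncard : ℚ) := by
  change S = protoSet (Fin q) m at hS
  subst hS
  have hq1 : (1 : ℚ) < q := by exact_mod_cast hq
  rw [← sum_pow_gaps m hq1.ne' (one_lt_pow₀ hq1 (by omega)).ne' (one_lt_pow₀ hq1 (by omega)).ne']
  calc ∑ n ∈ gaps m, (q : ℚ) ^ n = ({w : List (Fin q) | w.length ∈ gaps m}.ncard : ℚ) := by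
        simp [ncard_setOf_length_mem]
    _ ≤ _ := by
      exact_mod_cast Set.ncard_le_ncard (setOf_length_mem_gaps_subset (by omega))
        (finite_setOf_not_iterShuffle_protoSet (by omega))
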